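/- Two points t, u ∈ (0,1) are in the same orbit under Thompson's group F (acting on [0,1]) if and only if their binary expansions have the same tail, i.e., there exist finite binary strings μ, ν and an infinite binary string ω such that t = .μω and u = .νω in binary. -/

import Mathlib

/-- A real number is a dyadic rational. -/
def IsDyadic (x : ℝ) : Prop := ∃ (a : ℤ) (b : ℕ), x = (a : ℝ) / 2 ^ b

/-- `f` is an element of Thompson's group `F = PL₂(I)`. -/
def PL2Fun (f : ℝ → ℝ) : Prop :=
  f 0 = 0 ∧ f 1 = 1 ∧ StrictMonoOn f (Set.Icc 0 1) ∧
  ∃ (n : ℕ) (x : Fin (n + 1) → ℝ), StrictMono x ∧ x 0 = 0 ∧ x (Fin.last n) = 1 ∧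
    (∀ i, IsDyadic (x i)) ∧
    ∀ i : Fin n, ∃ (k : ℤ) (c : ℝ),
      ∀ t ∈ Set.Icc (x i.castSucc) (x i.succ), f t = (2 : ℝ) ^ k * t + c

/-- The real number with binary expansion `.d₀d₁d₂…`. -/
noncomputable def binVal (d : ℕ → Bool) : ℝ :=
  ∑' i : ℕ, (if d i then (1 : ℝ) else 0) / 2 ^ (i + 1)

/-- The infinite binary string obtained by prepending the finite string `μ` to `ω`. -/
def prependStr (μ : List Bool) (ω : ℕ → Bool) : ℕ → Bool :=
  fun i => if h : i < μ.length then μ.get ⟨i, h⟩ else ω (i - μ.length)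

/-!
Near `t`, an element of `F` is affine with slope `2 ^ k` and dyadic offset, so
`2 ^ n * u - 2 ^ m * t` is an integer for suitable `m, n`; then `2 ^ m * t` and `2 ^ n * u` have
the same fractional part, whose binary digits are the common tail.

Conversely, after moving finitely many digits of `ω` into both prefixes, `t` and `u` lie in standard
dyadic intervals `[A / 2 ^ M, (A + 1) / 2 ^ M]` and `[B / 2 ^ N, (B + 1) / 2 ^ N]` away from `0`
and `1`, at the same relative position `.ω`. Subdividing the parts of `[0, 1]` to the left and to
the right of these intervals into equally many standard dyadic intervals and mapping them affinely
onto each other gives an element of `F` sending `t` to `u`.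
-/

namespace IsDyadic

lemma zero : IsDyadic 0 := ⟨0, 0, by norm_num⟩

lemma add {x y : ℝ} (hx : IsDyadic x) (hy : IsDyadic y) : IsDyadic (x + y) := by
  obtain ⟨a, b, rfl⟩ := hx
  obtain ⟨c, d, rfl⟩ := hy
  exact ⟨a * 2 ^ d + c * 2 ^ b, b + d, by push_cast; field_simp; ring⟩

lemma neg {x : ℝ} (hx : IsDyadic x) : IsDyadic (-x) := by
  obtain ⟨a, b, rfl⟩ := hx
  exact ⟨-a, b, by push_cast; ring⟩

lemma sub {x y : ℝ} (hx : IsDyadic x) (hy : IsDyadic y) : IsDyadic (x - y) := by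
  simpa [sub_eq_add_neg] using hx.add hy.neg

lemma mul {x y : ℝ} (hx : IsDyadic x) (hy : IsDyadic y) : IsDyadic (x * y) := by
  obtain ⟨a, b, rfl⟩ := hx
  obtain ⟨c, d, rfl⟩ := hy
  exact ⟨a * c, b + d, by push_cast; field_simp; ring⟩

lemma two_zpow (k : ℤ) : IsDyadic ((2 : ℝ) ^ k) := by
  obtain ⟨n, rfl | rfl⟩ := Int.eq_nat_or_neg k
  · exact ⟨2 ^ n, 0, by simp⟩
  · exact ⟨1, n, by simp [zpow_neg]⟩

end IsDyadic

section BinaryExpansion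

lemma binVal_term_le (d : ℕ → Bool) (i : ℕ) :
    (if d i then (1 : ℝ) else 0) / 2 ^ (i + 1) ≤ 1 / 2 / 2 ^ i := by
  rw [pow_succ, div_div, mul_comm]
  gcongr
  split_ifs <;> norm_num

lemma summable_binVal_term (d : ℕ → Bool) :
    Summable (fun i : ℕ => (if d i then (1 : ℝ) else 0) / 2 ^ (i + 1)) :=
  .of_nonneg_of_le (fun i => by positivity) (binVal_term_le d) (summable_geometric_two' 1)

lemma binVal_nonneg (d : ℕ → Bool) : 0 ≤ binVal d :=
  tsum_nonneg fun i => by positivity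

lemma binVal_le_one (d : ℕ → Bool) : binVal d ≤ 1 := by
  rw [← tsum_geometric_two' 1]
  exact (summable_binVal_term d).tsum_le_tsum (binVal_term_le d) (summable_geometric_two' 1)

lemma binVal_eq_half_add (d : ℕ → Bool) :
    binVal d = ((if d 0 then (1 : ℝ) else 0) + binVal (fun i => d (i + 1))) / 2 := by
  rw [binVal, ← (summable_binVal_term d).sum_add_tsum_nat_add 1, Finset.sum_range_one, binVal,
    add_div, ← tsum_div_const]
  congr 1
  · norm_num
  · exact tsum_congr fun i => by rw [pow_succ]; ring

lemma binVal_const_false : binVal (fun _ => false) = 0 := by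
  simp [binVal]

lemma binVal_const_true : binVal (fun _ => true) = 1 := by
  rw [← tsum_geometric_two' 1, binVal]
  exact tsum_congr fun i => by rw [pow_succ, div_div, mul_comm]; simp

lemma exists_eq_true_of_binVal_pos {d : ℕ → Bool} (h : 0 < binVal d) : ∃ i, d i = true := by
  by_contra! hd
  simp only [ne_eq, Bool.not_eq_true] at hd
  simp [funext hd, binVal_const_false] at h

lemma exists_eq_false_of_binVal_lt_one {d : ℕ → Bool} (h : binVal d < 1) :
    ∃ i, d i = false := by
  by_contra! hd
  simp only [ne_eq, Bool.not_eq_false] at hd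
  simp [funext hd, binVal_const_true] at h

end BinaryExpansion

section Strings

@[simp]
lemma prependStr_nil (ω : ℕ → Bool) : prependStr [] ω = ω := by
  funext i
  simp [prependStr]

lemma prependStr_cons_zero (b : Bool) (μ : List Bool) (ω : ℕ → Bool) :
    prependStr (b :: μ) ω 0 = b := by
  simp [prependStr]

lemma prependStr_cons_succ (b : Bool) (μ : List Bool) (ω : ℕ → Bool) (i : ℕ) :
    prependStr (b :: μ) ω (i + 1) = prependStr μ ω i := by
  simp only [prependStr, List.length_cons, add_lt_add_iff_right]
  split_ifs
  · simp
  · congr 1; omega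

lemma prependStr_length_add (μ : List Bool) (ω : ℕ → Bool) (i : ℕ) :
    prependStr μ ω (μ.length + i) = ω i := by
  simp [prependStr]

lemma prependStr_ofFn (d : ℕ → Bool) (n : ℕ) :
    prependStr (List.ofFn fun i : Fin n => d i) (fun i => d (i + n)) = d := by
  funext i
  simp only [prependStr, List.length_ofFn, List.get_eq_getElem, List.getElem_ofFn]
  split_ifs
  · rfl
  · congr 1; omega

def strVal : List Bool → ℕ
  | [] => 0
  | b :: μ => b.toNat * 2 ^ μ.length + strVal μ

lemma strVal_pos {μ : List Bool} (h : true ∈ μ) : 0 < strVal μ := by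
  induction μ with
  | nil => simp at h
  | cons b μ ih =>
    cases b
    · simpa [strVal] using ih (by simpa using h)
    · simp [strVal]

lemma strVal_add_strVal_map_not (μ : List Bool) :
    strVal μ + 1 + strVal (μ.map not) = 2 ^ μ.length := by
  induction μ with
  | nil => rfl
  | cons b μ ih =>
    cases b <;> simp [strVal, pow_succ] <;> omega

lemma binVal_prependStr (μ : List Bool) (ω : ℕ → Bool) :
    binVal (prependStr μ ω) = (strVal μ + binVal ω) / 2 ^ μ.length := by
  induction μ with
  | nil => simp [strVal]
  | cons b μ ih =>
    rw [binVal_eq_half_add, prependStr_cons_zero]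
    simp only [prependStr_cons_succ, ih, strVal, List.length_cons, pow_succ]
    cases b <;> simp only [Bool.toNat, cond] <;> push_cast <;> field_simp <;> ring

end Strings

section BinaryDigits

/-- The binary digits of `Int.fract w`, i.e. of `w` when `w ∈ [0, 1)`. -/
noncomputable def binDigit (w : ℝ) (i : ℕ) : Bool :=
  decide ((1 : ℝ) / 2 ≤ Int.fract (2 ^ i * w))

lemma binDigit_fract_two_pow_mul (w : ℝ) (m i : ℕ) :
    binDigit (Int.fract (2 ^ m * w)) i = binDigit w (i + m) := by
  have h : (2 : ℝ) ^ i * Int.fract (2 ^ m * w) =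
      2 ^ (i + m) * w - ((2 ^ i * ⌊2 ^ m * w⌋ : ℤ) : ℝ) := by
    push_cast [Int.fract, pow_add]
    ring
  simp only [binDigit, h, Int.fract_sub_intCast]

lemma fract_two_mul_eq_sub_binDigit (w : ℝ) (hw : w ∈ Set.Ico 0 1) :
    Int.fract (2 * w) = 2 * w - (if binDigit w 0 then 1 else 0) := by
  rw [Int.fract_eq_iff]
  have hd : binDigit w 0 = decide (1 / 2 ≤ w) := by
    simp [binDigit, Int.fract_eq_self.mpr hw]
  rw [hd]
  by_cases h : (1 : ℝ) / 2 ≤ w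
  · simp only [h, decide_true, if_true]
    exact ⟨by linarith, by linarith [hw.2], 1, by push_cast; ring⟩
  · simp only [h, decide_false, Bool.false_eq_true, if_false]
    exact ⟨by linarith [hw.1], by linarith, 0, by simp⟩

lemma binVal_binDigit {w : ℝ} (hw : w ∈ Set.Ico 0 1) : binVal (binDigit w) = w := by
  have hshift : ∀ w ∈ Set.Ico (0 : ℝ) 1, binVal (binDigit w) - w =
      (binVal (binDigit (Int.fract (2 * w))) - Int.fract (2 * w)) / 2 := by
    intro w hw
    have htail : (fun i => binDigit w (i + 1)) = binDigit (Int.fract (2 * w)) := by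
      funext i
      simpa using (binDigit_fract_two_pow_mul w 1 i).symm
    rw [binVal_eq_half_add, htail, fract_two_mul_eq_sub_binDigit w hw]
    ring
  -- the error halves under the shift and is bounded by `1`, so it vanishes
  have hbound : ∀ n : ℕ, ∀ w ∈ Set.Ico (0 : ℝ) 1, |binVal (binDigit w) - w| ≤ (1 / 2) ^ n := by
    intro n
    induction n with
    | zero =>
      intro w hw
      have := binVal_nonneg (binDigit w)
      have := binVal_le_one (binDigit w)
      rw [pow_zero, abs_le]
      constructor <;> linarith [hw.1, hw.2]
    | succ n ih =>
      intro w hw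
      rw [hshift w hw, abs_div, abs_two, pow_succ]
      have := ih (Int.fract (2 * w)) ⟨Int.fract_nonneg _, Int.fract_lt_one _⟩
      linarith
  by_contra hne
  obtain ⟨n, hn⟩ := exists_pow_lt_of_lt_one (abs_pos.mpr (sub_ne_zero.mpr hne))
    (by norm_num : (1 : ℝ) / 2 < 1)
  exact (hbound n w hw).not_gt hn

lemma binVal_prependStr_binDigit {w : ℝ} (hw : w ∈ Set.Ico 0 1) (m : ℕ) :
    binVal (prependStr (List.ofFn fun i : Fin m => binDigit w i)
      (binDigit (Int.fract (2 ^ m * w)))) = w := by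
  have htail : binDigit (Int.fract (2 ^ m * w)) = fun i => binDigit w (i + m) :=
    funext (binDigit_fract_two_pow_mul w m)
  rw [htail, prependStr_ofFn, binVal_binDigit hw]

end BinaryDigits

lemma exists_fract_eq_of_eq_zpow_mul_add {t u c : ℝ} {k : ℤ} (hc : IsDyadic c)
    (h : u = 2 ^ k * t + c) : ∃ m n : ℕ, Int.fract (2 ^ m * t) = Int.fract (2 ^ n * u) := by
  obtain ⟨a, b, rfl⟩ := hc
  refine ⟨k.toNat + b, (-k).toNat + b, ?_⟩
  have hk : (2 : ℝ) ^ k = 2 ^ k.toNat / 2 ^ (-k).toNat := by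
    rw [← zpow_natCast, ← zpow_natCast, ← zpow_sub₀ two_ne_zero, Int.toNat_sub_toNat_neg]
  have hu : 2 ^ ((-k).toNat + b) * u =
      2 ^ (k.toNat + b) * t + ((2 ^ (-k).toNat * a : ℤ) : ℝ) := by
    rw [h, hk]
    push_cast
    field_simp
    ring
  rw [hu, Int.fract_add_intCast]

lemma exists_prependStr_of_fract_eq {t u : ℝ} (ht : t ∈ Set.Ico 0 1) (hu : u ∈ Set.Ico 0 1)
    {m n : ℕ} (h : Int.fract (2 ^ m * t) = Int.fract (2 ^ n * u)) :
    ∃ (μ ν : List Bool) (ω : ℕ → Bool),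
      t = binVal (prependStr μ ω) ∧ u = binVal (prependStr ν ω) :=
  ⟨_, _, _, (binVal_prependStr_binDigit ht m).symm, h ▸ (binVal_prependStr_binDigit hu n).symm⟩

lemma Fin.exists_castSucc_le_lt_succ {α : Type*} [LinearOrder α] {n : ℕ}
    (x : Fin (n + 1) → α) {t : α} (h0 : x 0 ≤ t) (hn : t < x (Fin.last n)) : ∃ i : Fin n, x i.castSucc ≤ t ∧ t < x i.succ := by
  induction n with
  | zero => exact absurd (h0.trans_lt hn) (lt_irrefl _)
  | succ n ih =>
    by_cases hlast : t < x (Fin.last n).castSucc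
    · obtain ⟨i, hi⟩ := ih (fun i => x i.castSucc) h0 hlast
      exact ⟨i.castSucc, hi.1, by rw [Fin.succ_castSucc]; exact hi.2⟩
    · exact ⟨Fin.last n, not_lt.mp hlast, by simpa using hn⟩

lemma PL2Fun.exists_isDyadic_affine {g : ℝ → ℝ} (hg : PL2Fun g) {t : ℝ} (ht : t ∈ Set.Ico 0 1) :
    ∃ (k : ℤ) (c : ℝ), IsDyadic c ∧ g t = 2 ^ k * t + c := by
  obtain ⟨hg0, -, -, n, x, hx, hx0, hxn, hdy, hpiece⟩ := hg
  have hoffset : ∀ (i : Fin n) (k : ℤ) (c : ℝ),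
      (∀ t ∈ Set.Icc (x i.castSucc) (x i.succ), g t = 2 ^ k * t + c) →
        IsDyadic (g (x i.castSucc)) → IsDyadic c := by
    intro i k c hkc hgi
    have := hkc _ ⟨le_rfl, (hx i.castSucc_lt_succ).le⟩
    rw [this] at hgi
    simpa using hgi.sub ((IsDyadic.two_zpow k).mul (hdy i.castSucc))
  have hnodes : ∀ j, IsDyadic (g (x j)) := by
    intro j
    induction j using Fin.induction with
    | zero => simpa [hx0, hg0] using IsDyadic.zero
    | succ i ih =>
      obtain ⟨k, c, hkc⟩ := hpiece i
      rw [hkc _ ⟨(hx i.castSucc_lt_succ).le, le_rfl⟩]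
      exact ((IsDyadic.two_zpow k).mul (hdy _)).add (hoffset i k c hkc ih)
  obtain ⟨i, hi⟩ := Fin.exists_castSucc_le_lt_succ x (hx0 ▸ ht.1) (hxn ▸ ht.2)
  obtain ⟨k, c, hkc⟩ := hpiece i
  exact ⟨k, c, hoffset i k c hkc (hnodes _), hkc t ⟨hi.1, hi.2.le⟩⟩

/-- The piecewise-linear interpolation of the nodes `(x i, y i)`, `i ≤ r`; constant outside
`[x 0, x r]`. -/
noncomputable def plInterp (r : ℕ) (x y : ℕ → ℝ) (t : ℝ) : ℝ :=
  y 0 + ∑ i ∈ Finset.range r,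
    (y (i + 1) - y i) / (x (i + 1) - x i) * (max (min t (x (i + 1))) (x i) - x i)

section PLInterp

variable {r : ℕ} {x y : ℕ → ℝ}

lemma plInterp_eq_of_mem_Icc (hx : ∀ i < r, x i < x (i + 1)) {j : ℕ} (hj : j < r) {t : ℝ}
    (ht : t ∈ Set.Icc (x j) (x (j + 1))) :
    plInterp r x y t = y j + (y (j + 1) - y j) / (x (j + 1) - x j) * (t - x j) := by
  have hmono : MonotoneOn x (Set.Iic r) :=
    (strictMonoOn_Iic_of_lt_succ fun m hm => by simpa using hx m hm).monotoneOn
  have hbelow : ∀ i ∈ Finset.range j,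
      (y (i + 1) - y i) / (x (i + 1) - x i) * (max (min t (x (i + 1))) (x i) - x i) =
        y (i + 1) - y i := by
    intro i hi
    have hi : i < j := Finset.mem_range.mp hi
    have hle : x (i + 1) ≤ t :=
      (hmono (by simp; omega) (by simp; omega) (by omega)).trans ht.1
    rw [min_eq_right hle, max_eq_left (hx i (by omega)).le,
      div_mul_cancel₀ _ (sub_ne_zero.mpr (hx i (by omega)).ne')]
  have habove : ∀ i ∈ Finset.Ico (j + 1) r,
      (y (i + 1) - y i) / (x (i + 1) - x i) * (max (min t (x (i + 1))) (x i) - x i) = 0 := by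
    intro i hi
    obtain ⟨hji, hir⟩ := Finset.mem_Ico.mp hi
    have hle : t ≤ x i := ht.2.trans (hmono (by simp; omega) (by simp; omega) hji)
    rw [min_eq_left (hle.trans (hx i hir).le), max_eq_right hle, sub_self, mul_zero]
  rw [plInterp, ← Finset.sum_range_add_sum_Ico _ (show j + 1 ≤ r by omega),
    Finset.sum_range_succ, Finset.sum_congr rfl hbelow, Finset.sum_range_sub,
    Finset.sum_congr rfl habove, Finset.sum_const_zero, min_eq_left ht.2, max_eq_left ht.1]
  ring

lemma plInterp_strictMonoOn (hx : ∀ i < r, x i < x (i + 1)) (hy : ∀ i < r, y i < y (i + 1)) :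
    StrictMonoOn (plInterp r x y) (Set.Icc (x 0) (x r)) := by
  intro s hs t ht hst
  obtain ⟨i, hsi, his⟩ := Fin.exists_castSucc_le_lt_succ (fun i : Fin (r + 1) => x i)
    (t := s) (by simpa using hs.1) (by simpa using hst.trans_le ht.2)
  simp only [Fin.val_castSucc, Fin.val_succ] at hsi his
  have hslope : ∀ i < r, 0 < (y (i + 1) - y i) / (x (i + 1) - x i) := fun i hi =>
    div_pos (sub_pos.mpr (hy i hi)) (sub_pos.mpr (hx i hi))
  rw [plInterp, plInterp, add_lt_add_iff_left]
  refine Finset.sum_lt_sum (fun j hj => ?_) ⟨(i : ℕ), Finset.mem_range.mpr i.isLt, ?_⟩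
  · have := hslope j (Finset.mem_range.mp hj)
    gcongr
  · refine mul_lt_mul_of_pos_left ?_ (hslope i i.isLt)
    rw [min_eq_left his.le, max_eq_left hsi]
    exact sub_lt_sub_right (lt_max_of_lt_left (lt_min hst his)) _

lemma pl2Fun_plInterp (hx : ∀ i < r, x i < x (i + 1)) (hx0 : x 0 = 0) (hxr : x r = 1)
    (hy0 : y 0 = 0) (hyr : y r = 1) (hdy : ∀ i ≤ r, IsDyadic (x i))
    (hslope : ∀ i < r, ∃ k : ℤ, y (i + 1) - y i = 2 ^ k * (x (i + 1) - x i)) :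
    PL2Fun (plInterp r x y) := by
  have hr : 0 < r := Nat.pos_of_ne_zero fun h => by simp_all
  have hy : ∀ i < r, y i < y (i + 1) := fun i hi => by
    obtain ⟨k, hk⟩ := hslope i hi
    have := sub_pos.mpr (hx i hi)
    have : (0 : ℝ) < 2 ^ k := by positivity
    nlinarith
  refine ⟨?_, ?_, ?_, r, fun i => x i, ?_, by simpa using hx0, by simpa using hxr,
    fun i => hdy i (by omega), fun i => ?_⟩
  · simpa [hx0, hy0] using plInterp_eq_of_mem_Icc hx (y := y) hr ⟨le_rfl, (hx 0 hr).le⟩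
  · have hr' : r - 1 + 1 = r := by omega
    have hlast := hx (r - 1) (by omega)
    have := plInterp_eq_of_mem_Icc hx (y := y) (show r - 1 < r by omega) ⟨hlast.le, le_rfl⟩
    rw [hr', hxr] at this hlast
    rw [this, div_mul_cancel₀ _ (sub_ne_zero.mpr hlast.ne'), hyr]
    ring
  · simpa [hx0, hxr] using plInterp_strictMonoOn hx hy
  · rw [Fin.strictMono_iff_lt_succ]
    exact fun i => hx i i.isLt
  · obtain ⟨k, hk⟩ := hslope i i.isLt
    refine ⟨k, y i - 2 ^ k * x i, fun t ht => ?_⟩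
    rw [plInterp_eq_of_mem_Icc hx i.isLt ht, hk,
      mul_div_cancel_right₀ _ (sub_ne_zero.mpr (hx i i.isLt).ne')]
    ring

end PLInterp

section DyadicSubdivision

/-- A list `E` of exponents encodes the subdivision of `[0, lenSum E]` into consecutive intervals
of lengths `2⁻ᵉ`, `e ∈ E`, whose nodes are the `lenSum (E.take i)`. -/
noncomputable def lenSum (E : List ℕ) : ℝ := (E.map fun e => ((2 : ℝ) ^ e)⁻¹).sum

@[simp]
lemma lenSum_nil : lenSum [] = 0 := rfl

@[simp]
lemma lenSum_cons (e : ℕ) (E : List ℕ) : lenSum (e :: E) = ((2 : ℝ) ^ e)⁻¹ + lenSum E := by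
  simp [lenSum]

@[simp]
lemma lenSum_append (E F : List ℕ) : lenSum (E ++ F) = lenSum E + lenSum F := by
  simp [lenSum]

lemma lenSum_take_succ (E : List ℕ) {i : ℕ} (hi : i < E.length) :
    lenSum (E.take (i + 1)) = lenSum (E.take i) + ((2 : ℝ) ^ E[i])⁻¹ := by
  rw [← List.take_append_getElem hi, lenSum_append, lenSum_cons, lenSum_nil, add_zero]

lemma lenSum_take_lt_succ (E : List ℕ) {i : ℕ} (hi : i < E.length) :
    lenSum (E.take i) < lenSum (E.take (i + 1)) := by
  rw [lenSum_take_succ E hi]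
  exact lt_add_of_pos_right _ (by positivity)

lemma lenSum_take_length_add_append (E F : List ℕ) (i : ℕ) :
    lenSum ((E ++ F).take (E.length + i)) = lenSum E + lenSum (F.take i) := by
  rw [List.take_length_add_append, lenSum_append]

lemma isDyadic_lenSum (E : List ℕ) : IsDyadic (lenSum E) := by
  induction E with
  | nil => exact IsDyadic.zero
  | cons e E ih =>
    rw [lenSum_cons]
    exact IsDyadic.add ⟨1, e, by simp⟩ ih

lemma exists_length_eq_lenSum_eq (p m : ℕ) (hp : 0 < p) {L : ℕ} (hL : p ≤ L) :
    ∃ E : List ℕ, E.length = L ∧ lenSum E = p / 2 ^ m := by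
  induction L, hL using Nat.le_induction with
  | base => exact ⟨List.replicate p m, by simp, by simp [lenSum, div_eq_mul_inv]⟩
  | succ L _ ih =>
    obtain ⟨_ | ⟨e, E⟩, hlen, hsum⟩ := ih
    · simp at hlen; omega
    · refine ⟨(e + 1) :: (e + 1) :: E, by simpa using hlen, ?_⟩
      rw [← hsum, lenSum_cons, lenSum_cons, lenSum_cons, pow_succ]
      ring

lemma pl2Fun_plInterp_lenSum {E F : List ℕ} (hEF : E.length = F.length) (hE : lenSum E = 1)
    (hF : lenSum F = 1) :
    PL2Fun (plInterp E.length (fun i => lenSum (E.take i)) (fun i => lenSum (F.take i))) := by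
  refine pl2Fun_plInterp (fun i hi => lenSum_take_lt_succ E hi) (by simp) (by simpa using hE)
    (by simp) (by simpa [hEF] using hF) (fun i _ => isDyadic_lenSum _)
    (fun i hi => ⟨E[i] - F[i], ?_⟩)
  rw [lenSum_take_succ E hi, lenSum_take_succ F (hEF ▸ hi), add_sub_cancel_left,
      add_sub_cancel_left, zpow_sub₀ two_ne_zero, zpow_natCast, zpow_natCast]
  field_simp

end DyadicSubdivision

lemma exists_pl2Fun_apply_add_div_pow {A A' M B B' N : ℕ} (hA : 0 < A) (hA' : 0 < A')
    (hAM : A + 1 + A' = 2 ^ M) (hB : 0 < B) (hB' : 0 < B') (hBN : B + 1 + B' = 2 ^ N) {w : ℝ}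
    (hw : w ∈ Set.Icc 0 1) :
    ∃ g : ℝ → ℝ, PL2Fun g ∧ g ((A + w) / 2 ^ M) = (B + w) / 2 ^ N := by
  obtain ⟨E₁, hE₁, hE₁s⟩ := exists_length_eq_lenSum_eq A M hA (le_max_left A B)
  obtain ⟨F₁, hF₁, hF₁s⟩ := exists_length_eq_lenSum_eq B N hB (le_max_right A B)
  obtain ⟨E₂, hE₂, hE₂s⟩ := exists_length_eq_lenSum_eq A' M hA' (le_max_left A' B')
  obtain ⟨F₂, hF₂, hF₂s⟩ := exists_length_eq_lenSum_eq B' N hB' (le_max_right A' B')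
  -- `[0, 1]` is cut into `[0, A/2^M]`, `[A/2^M, (A+1)/2^M]`, `[(A+1)/2^M, 1]`, and likewise for `B`
  have htotal : ∀ C D K : ℕ, C + 1 + D = 2 ^ K →
      (C : ℝ) / 2 ^ K + (((2 : ℝ) ^ K)⁻¹ + D / 2 ^ K) = 1 := by
    intro C D K h
    have h' : (C : ℝ) + 1 + D = 2 ^ K := by exact_mod_cast h
    field_simp
    linarith
  have hEF : (E₁ ++ M :: E₂).length = (F₁ ++ N :: F₂).length := by simp [hE₁, hF₁, hE₂, hF₂]
  refine ⟨_, pl2Fun_plInterp_lenSum hEF (by simp [hE₁s, hE₂s, htotal A A' M hAM])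
    (by simp [hF₁s, hF₂s, htotal B B' N hBN]), ?_⟩
  have hj : max A B < (E₁ ++ M :: E₂).length := by simp [hE₁]
  have hnode : ∀ (L₁ L₂ : List ℕ) (C K : ℕ), L₁.length = max A B → lenSum L₁ = C / 2 ^ K →
      lenSum ((L₁ ++ K :: L₂).take (max A B)) = C / 2 ^ K ∧
        lenSum ((L₁ ++ K :: L₂).take (max A B + 1)) = (C + 1) / 2 ^ K := by
    intro L₁ L₂ C K hlen hsum
    rw [← hlen, ← add_zero L₁.length, lenSum_take_length_add_append, add_zero,
      lenSum_take_length_add_append]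
    simp [hsum, add_div]
  obtain ⟨hx, hx'⟩ := hnode E₁ E₂ A M hE₁ hE₁s
  obtain ⟨hy, hy'⟩ := hnode F₁ F₂ B N hF₁ hF₁s
  rw [plInterp_eq_of_mem_Icc (x := fun i => lenSum ((E₁ ++ M :: E₂).take i))
    (fun i hi => lenSum_take_lt_succ _ hi) hj, hx, hx', hy, hy']
  · field_simp
    ring
  · rw [hx, hx']
    exact ⟨by gcongr; linarith [hw.1], by gcongr; exact hw.2⟩

lemma exists_pl2Fun_apply_prependStr {μ ν : List Bool} (hμ : true ∈ μ) (hμ' : false ∈ μ)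
    (hν : true ∈ ν) (hν' : false ∈ ν) (σ : ℕ → Bool) :
    ∃ g : ℝ → ℝ, PL2Fun g ∧ g (binVal (prependStr μ σ)) = binVal (prependStr ν σ) := by
  rw [binVal_prependStr, binVal_prependStr]
  exact exists_pl2Fun_apply_add_div_pow (strVal_pos hμ)
    (strVal_pos (μ := μ.map not) (List.mem_map_of_mem hμ')) (strVal_add_strVal_map_not μ)
    (strVal_pos hν) (strVal_pos (μ := ν.map not) (List.mem_map_of_mem hν'))
    (strVal_add_strVal_map_not ν) ⟨binVal_nonneg σ, binVal_le_one σ⟩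

lemma exists_forall_ge_true_mem_false_mem_ofFn {d : ℕ → Bool} (h0 : 0 < binVal d)
    (h1 : binVal d < 1) :
    ∃ L₀, ∀ L ≥ L₀, true ∈ List.ofFn (fun i : Fin L => d i) ∧
      false ∈ List.ofFn (fun i : Fin L => d i) := by
  obtain ⟨i, hi⟩ := exists_eq_true_of_binVal_pos h0
  obtain ⟨j, hj⟩ := exists_eq_false_of_binVal_lt_one h1
  refine ⟨max i j + 1, fun L hL => ⟨?_, ?_⟩⟩
  · exact List.mem_ofFn.mpr ⟨⟨i, by omega⟩, hi⟩
  · exact List.mem_ofFn.mpr ⟨⟨j, by omega⟩, hj⟩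

lemma prependStr_ofFn_prependStr (μ : List Bool) (ω : ℕ → Bool) (n : ℕ) :
    prependStr (List.ofFn fun i : Fin (μ.length + n) => prependStr μ ω i) (fun i => ω (i + n)) =
      prependStr μ ω := by
  conv_rhs => rw [← prependStr_ofFn (prependStr μ ω) (μ.length + n)]
  congr 1
  funext i
  rw [show i + (μ.length + n) = μ.length + (i + n) by ring, prependStr_length_add]

lemma exists_pl2Fun_apply_of_mem_Ioo {μ ν : List Bool} {ω : ℕ → Bool}
    (ht : binVal (prependStr μ ω) ∈ Set.Ioo 0 1) (hu : binVal (prependStr ν ω) ∈ Set.Ioo 0 1) :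
    ∃ g : ℝ → ℝ, PL2Fun g ∧ g (binVal (prependStr μ ω)) = binVal (prependStr ν ω) := by
  obtain ⟨L, hL⟩ := exists_forall_ge_true_mem_false_mem_ofFn ht.1 ht.2
  obtain ⟨L', hL'⟩ := exists_forall_ge_true_mem_false_mem_ofFn hu.1 hu.2
  -- move the first `L + L'` digits of `ω` into both prefixes
  obtain ⟨hμ, hμ'⟩ := hL (μ.length + (L + L')) (by omega)
  obtain ⟨hν, hν'⟩ := hL' (ν.length + (L + L')) (by omega)
  have := exists_pl2Fun_apply_prependStr hμ hμ' hν hν' (fun i => ω (i + (L + L')))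
  rwa [prependStr_ofFn_prependStr, prependStr_ofFn_prependStr] at this

theorem stmt1 (t u : ℝ) (ht : t ∈ Set.Ioo (0 : ℝ) 1) (hu : u ∈ Set.Ioo (0 : ℝ) 1) :
    (∃ g : ℝ → ℝ, PL2Fun g ∧ g t = u) ↔
      ∃ (μ ν : List Bool) (ω : ℕ → Bool),
        t = binVal (prependStr μ ω) ∧ u = binVal (prependStr ν ω) := by
  constructor
  · rintro ⟨g, hg, rfl⟩
    obtain ⟨k, c, hc, hgt⟩ := hg.exists_isDyadic_affine (Set.Ioo_subset_Ico_self ht)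
    obtain ⟨m, n, hmn⟩ := exists_fract_eq_of_eq_zpow_mul_add hc hgt
    exact exists_prependStr_of_fract_eq (Set.Ioo_subset_Ico_self ht)
      (Set.Ioo_subset_Ico_self hu) hmn
  · rintro ⟨μ, ν, ω, rfl, rfl⟩
    exact exists_pl2Fun_apply_of_mem_Ioo ht hu
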